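/- Let x_1, …, x_n ∈ ℝ^d be unit vectors, let b : ℕ → ℝ satisfy b_0 ≥ 1, b_k ≥ 1/k² for k ≥ 1, and Σ_k b_k < ∞, and suppose the matrix H with H_{ab} = Σ_k b_k (x_a·x_b)^k is positive definite. For each k ∈ ℕ let a_{k,v} ∈ ℝ (v ∈ ℕ) be coefficients and β_{k,v,1}, …, β_{k,v,k} ∈ ℝ^d be vectors, and set ã_k = Σ_{v∈ℕ} |a_{k,v}| Π_{i=1}^k ‖β_{k,v,i}‖. Suppose ã_0 < ∞ and Σ_{k≥1} k ã_k < ∞. Define y ∈ ℝⁿ by y_a = Σ_{k=0}^∞ Σ_{v∈ℕ} a_{k,v} Π_{i=1}^k (β_{k,v,i} · x_a) (absolutely convergent). Then √(yᵀ H⁻¹ y) ≤ Σ_{k≥1} k ã_k + ã_0, i.e. √(yᵀH⁻¹y) ≤ g̃′(1) + g̃(0) where g̃(t) = Σ_k ã_k t^k. -/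

import Mathlib

open Matrix
open scoped RealInnerProductSpace

/-!
By duality, `√(yᵀH⁻¹y) ≤ M` as soon as `zᵀy ≤ M √(zᵀHz)` for every `z`. Writing
`sₖ(z) = ∑_{p,c} z_p z_c ⟪x_p, x_c⟫ᵏ`, we have `zᵀHz = ∑ₖ bₖ sₖ(z)`, so `bₖ ≥ 1/max(k,1)²` gives
`√sₖ(z) ≤ max(k,1) √(zᵀHz)`. On the other hand `sₖ(z) = ‖∑_c z_c x_c^{⊗k}‖²`, and Cauchy–Schwarz
against the elementary tensor `β_{k,v,1} ⊗ ⋯ ⊗ β_{k,v,k}` bounds the `(k,v)` term of `zᵀy` by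
`|a_{k,v}| ∏ᵢ ‖β_{k,v,i}‖ √sₖ(z)`. Summing, `zᵀy ≤ ∑ₖ max(k,1) ãₖ √(zᵀHz) = (g̃′(1) + g̃(0)) √(zᵀHz)`.
-/

/-- The `k`-th auxiliary coefficient `ãₖ = ∑_v |a_{k,v}| ∏ᵢ ‖β_{k,v,i}‖` of a
multivariate power-series family. -/
noncomputable def auxCoef (d : ℕ) (a : ℕ → ℕ → ℝ)
    (β : (k : ℕ) → ℕ → Fin k → EuclideanSpace ℝ (Fin d)) (k : ℕ) : ℝ :=
  ∑' v : ℕ, |a k v| * ∏ i : Fin k, ‖β k v i‖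

section Tensor

variable {ι κ : Type*} [Fintype ι] [DecidableEq ι] [Fintype κ]

noncomputable def tprodVec (u : ι → EuclideanSpace ℝ κ) : EuclideanSpace ℝ (ι → κ) :=
  WithLp.toLp 2 fun f => ∏ i, u i (f i)

lemma inner_tprodVec (u w : ι → EuclideanSpace ℝ κ) :
    ⟪tprodVec u, tprodVec w⟫ = ∏ i, ⟪u i, w i⟫ := by
  simp only [PiLp.inner_apply, RCLike.inner_apply, conj_trivial, tprodVec]
  rw [Fintype.prod_sum fun i j => w i j * u i j]
  exact Finset.sum_congr rfl fun f _ => Finset.prod_mul_distrib.symm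

lemma norm_tprodVec (u : ι → EuclideanSpace ℝ κ) : ‖tprodVec u‖ = ∏ i, ‖u i‖ := by
  have h : ‖tprodVec u‖ ^ 2 = (∏ i, ‖u i‖) ^ 2 := by
    rw [← real_inner_self_eq_norm_sq, inner_tprodVec, ← Finset.prod_pow]
    exact Finset.prod_congr rfl fun i _ => real_inner_self_eq_norm_sq (u i)
  exact (pow_left_inj₀ (norm_nonneg _) (by positivity) two_ne_zero).1 h

end Tensor

section InnerPow

variable {ι κ : Type*} [Fintype ι] [Fintype κ]

noncomputable def innerPowMatrix (x : ι → EuclideanSpace ℝ κ) (k : ℕ) : Matrix ι ι ℝ :=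
  Matrix.of fun p c => ⟪x p, x c⟫ ^ k

lemma inner_tprodVec_sum_smul (x : ι → EuclideanSpace ℝ κ) (z : ι → ℝ) {k : ℕ}
    (u : Fin k → EuclideanSpace ℝ κ) :
    ⟪tprodVec u, ∑ c, z c • tprodVec fun _ : Fin k => x c⟫ = ∑ c, z c * ∏ i, ⟪u i, x c⟫ := by
  simp only [inner_sum, real_inner_smul_right, inner_tprodVec]

lemma dotProduct_innerPowMatrix_mulVec (x : ι → EuclideanSpace ℝ κ) (z : ι → ℝ) (k : ℕ) :
    z ⬝ᵥ (innerPowMatrix x k *ᵥ z) = ‖∑ c, z c • tprodVec fun _ : Fin k => x c‖ ^ 2 := by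
  rw [← real_inner_self_eq_norm_sq, sum_inner]
  simp only [real_inner_smul_left, inner_tprodVec_sum_smul, Finset.prod_const,
    Finset.card_univ, Fintype.card_fin, dotProduct, mulVec, innerPowMatrix, of_apply,
    Finset.mul_sum]
  exact Finset.sum_congr rfl fun p _ => Finset.sum_congr rfl fun c _ => by ring

lemma dotProduct_innerPowMatrix_mulVec_nonneg (x : ι → EuclideanSpace ℝ κ) (z : ι → ℝ) (k : ℕ) :
    0 ≤ z ⬝ᵥ (innerPowMatrix x k *ᵥ z) := by
  rw [dotProduct_innerPowMatrix_mulVec]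
  positivity

/-- Cauchy–Schwarz in the `k`-fold tensor power. -/
lemma abs_sum_mul_prod_inner_le (x : ι → EuclideanSpace ℝ κ) (z : ι → ℝ) {k : ℕ}
    (u : Fin k → EuclideanSpace ℝ κ) :
    |∑ c, z c * ∏ i, ⟪u i, x c⟫| ≤ (∏ i, ‖u i‖) * √(z ⬝ᵥ (innerPowMatrix x k *ᵥ z)) := by
  rw [← inner_tprodVec_sum_smul, dotProduct_innerPowMatrix_mulVec, Real.sqrt_sq (norm_nonneg _),
    ← norm_tprodVec]
  exact abs_real_inner_le_norm _ _

end InnerPow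

lemma abs_prod_inner_le_prod_norm {κ : Type*} [Fintype κ] {k : ℕ}
    (u : Fin k → EuclideanSpace ℝ κ) {v : EuclideanSpace ℝ κ} (hv : ‖v‖ ≤ 1) :
    |∏ i, ⟪u i, v⟫| ≤ ∏ i, ‖u i‖ := by
  rw [Finset.abs_prod]
  refine Finset.prod_le_prod (fun i _ => abs_nonneg _) fun i _ => ?_
  calc |⟪u i, v⟫| ≤ ‖u i‖ * ‖v‖ := abs_real_inner_le_norm _ _
    _ ≤ ‖u i‖ := mul_le_of_le_one_right (norm_nonneg _) hv

lemma abs_tsum_tsum_le {α β : Type*} {F A : α → β → ℝ} {r : α → ℝ}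
    (hF : ∀ k v, |F k v| ≤ A k v * r k) (hA : ∀ k, Summable (A k))
    (hr : Summable fun k => (∑' v, A k v) * r k) :
    |∑' k, ∑' v, F k v| ≤ ∑' k, (∑' v, A k v) * r k := by
  simp only [← Real.norm_eq_abs] at hF ⊢
  exact tsum_of_norm_bounded hr.hasSum fun k =>
    tsum_of_norm_bounded ((hA k).hasSum.mul_right (r k)) (hF k)

lemma Finset.sum_tsum_tsum_comm {ι α β : Type*} (s : Finset ι) {f : ι → α → β → ℝ}
    (hf : ∀ c ∈ s, ∀ k, Summable (f c k)) (hf' : ∀ c ∈ s, Summable fun k => ∑' v, f c k v) :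
    ∑ c ∈ s, ∑' k, ∑' v, f c k v = ∑' k, ∑' v, ∑ c ∈ s, f c k v := by
  rw [← Summable.tsum_finsetSum hf']
  exact tsum_congr fun k => (Summable.tsum_finsetSum fun c hc => hf c hc k).symm

lemma auxCoef_nonneg (d : ℕ) (a : ℕ → ℕ → ℝ)
    (β : (k : ℕ) → ℕ → Fin k → EuclideanSpace ℝ (Fin d)) (k : ℕ) : 0 ≤ auxCoef d a β k :=
  tsum_nonneg fun _ => mul_nonneg (abs_nonneg _) (Finset.prod_nonneg fun _ _ => norm_nonneg _)

lemma abs_dotProduct_le_tsum_auxCoef_mul_sqrt {ι : Type*} [Fintype ι] {d : ℕ}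
    {x : ι → EuclideanSpace ℝ (Fin d)} (hx : ∀ c, ‖x c‖ ≤ 1)
    {a : ℕ → ℕ → ℝ} {β : (k : ℕ) → ℕ → Fin k → EuclideanSpace ℝ (Fin d)}
    (haux : ∀ k, Summable fun v => |a k v| * ∏ i : Fin k, ‖β k v i‖)
    (hA : Summable (auxCoef d a β)) {y : ι → ℝ}
    (hy : ∀ c, y c = ∑' k, ∑' v, a k v * ∏ i : Fin k, ⟪β k v i, x c⟫) (z : ι → ℝ)
    (hz : Summable fun k => auxCoef d a β k * √(z ⬝ᵥ (innerPowMatrix x k *ᵥ z))) :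
    |z ⬝ᵥ y| ≤ ∑' k, auxCoef d a β k * √(z ⬝ᵥ (innerPowMatrix x k *ᵥ z)) := by
  have hterm : ∀ c k v, |a k v * ∏ i, ⟪β k v i, x c⟫| ≤ |a k v| * ∏ i, ‖β k v i‖ :=
    fun c k v => by
      rw [abs_mul]
      exact mul_le_mul_of_nonneg_left (abs_prod_inner_le_prod_norm _ (hx c)) (abs_nonneg _)
  have hsummable_v : ∀ c k, Summable fun v => a k v * ∏ i, ⟪β k v i, x c⟫ := fun c k =>
    Summable.of_norm_bounded (haux k) (hterm c k)
  have hsummable_k : ∀ c, Summable fun k => ∑' v, a k v * ∏ i, ⟪β k v i, x c⟫ := fun c =>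
    Summable.of_norm_bounded hA fun k =>
      tsum_of_norm_bounded (haux k).hasSum (hterm c k)
  have hexpand : z ⬝ᵥ y = ∑' k, ∑' v, a k v * ∑ c, z c * ∏ i, ⟪β k v i, x c⟫ := by
    simp only [dotProduct, hy, ← tsum_mul_left, Finset.mul_sum]
    rw [Finset.sum_tsum_tsum_comm _ (fun c _ k => (hsummable_v c k).mul_left (z c))
      fun c _ => by simpa only [tsum_mul_left] using (hsummable_k c).mul_left (z c)]
    exact tsum_congr fun k => tsum_congr fun v => Finset.sum_congr rfl fun c _ => by ring
  rw [hexpand]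
  refine abs_tsum_tsum_le (fun k v => ?_) haux hz
  rw [abs_mul, mul_assoc]
  exact mul_le_mul_of_nonneg_left (abs_sum_mul_prod_inner_le x z _) (abs_nonneg _)

lemma summable_mul_pow_of_abs_le_one {b : ℕ → ℝ} (hb : Summable b) (hb0 : ∀ k, 0 ≤ b k)
    {t : ℝ} (ht : |t| ≤ 1) : Summable fun k => b k * t ^ k :=
  Summable.of_norm_bounded hb fun k => by
    rw [Real.norm_eq_abs, abs_mul, abs_pow, abs_of_nonneg (hb0 k)]
    exact mul_le_of_le_one_right (hb0 k) (pow_le_one₀ (abs_nonneg t) ht)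

section Kernel

variable {ι κ : Type*} [Fintype ι] [Fintype κ] {x : ι → EuclideanSpace ℝ κ} {b : ℕ → ℝ}
  {H : Matrix ι ι ℝ}

lemma hasSum_dotProduct_innerPowMatrix_mulVec
    (hH : ∀ p c, HasSum (fun k => b k * ⟪x p, x c⟫ ^ k) (H p c)) (z : ι → ℝ) :
    HasSum (fun k => b k * z ⬝ᵥ (innerPowMatrix x k *ᵥ z)) (z ⬝ᵥ (H *ᵥ z)) := by
  simp only [dotProduct, mulVec, innerPowMatrix, of_apply, Finset.mul_sum]
  refine hasSum_sum fun p _ => hasSum_sum fun c _ => ?_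
  simpa only [mul_left_comm (b _), mul_assoc] using ((hH p c).mul_right (z c)).mul_left (z p)

lemma sqrt_dotProduct_innerPowMatrix_mulVec_le
    (hH : ∀ p c, HasSum (fun k => b k * ⟪x p, x c⟫ ^ k) (H p c)) (hb : ∀ k, 0 ≤ b k)
    {k : ℕ} {w : ℝ} (hw : 0 ≤ w) (hbw : 1 ≤ w ^ 2 * b k) (z : ι → ℝ) :
    √(z ⬝ᵥ (innerPowMatrix x k *ᵥ z)) ≤ w * √(z ⬝ᵥ (H *ᵥ z)) := by
  set s := z ⬝ᵥ (innerPowMatrix x k *ᵥ z)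
  have hs : 0 ≤ s := dotProduct_innerPowMatrix_mulVec_nonneg x z k
  have hbs : b k * s ≤ z ⬝ᵥ (H *ᵥ z) :=
    le_hasSum (hasSum_dotProduct_innerPowMatrix_mulVec hH z) k fun j _ =>
      mul_nonneg (hb j) (dotProduct_innerPowMatrix_mulVec_nonneg x z j)
  calc √s ≤ √(w ^ 2 * z ⬝ᵥ (H *ᵥ z)) := Real.sqrt_le_sqrt (by nlinarith)
    _ = w * √(z ⬝ᵥ (H *ᵥ z)) := by rw [Real.sqrt_mul (sq_nonneg w), Real.sqrt_sq hw]

end Kernel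

lemma hasSum_max_one_mul {f : ℕ → ℝ} (hf : Summable fun k : ℕ => (k : ℝ) * f k) :
    HasSum (fun k : ℕ => max (k : ℝ) 1 * f k) ((∑' k : ℕ, (k : ℝ) * f k) + f 0) := by
  convert hf.hasSum.add (hasSum_ite_eq 0 (f 0)) using 1
  ext k
  rcases Nat.eq_zero_or_pos k with rfl | hk
  · simp
  · have : (1 : ℝ) ≤ k := by exact_mod_cast hk
    simp [max_eq_left this, hk.ne']

lemma one_le_max_one_sq_mul {b : ℕ → ℝ} (hb0 : 1 ≤ b 0)
    (hbk : ∀ k : ℕ, 1 ≤ k → 1 / (k : ℝ) ^ 2 ≤ b k) (k : ℕ) : 1 ≤ max (k : ℝ) 1 ^ 2 * b k := by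
  rcases Nat.eq_zero_or_pos k with rfl | hk
  · simpa using hb0
  · have hk1 : (1 : ℝ) ≤ k := by exact_mod_cast hk
    rw [max_eq_left hk1, ← div_le_iff₀' (by positivity)]
    simpa using hbk k hk

lemma Matrix.sqrt_dotProduct_inv_mulVec_le {ι : Type*} [Fintype ι] [DecidableEq ι]
    {H : Matrix ι ι ℝ} (hH : IsUnit H.det) {y : ι → ℝ} {M : ℝ} (hM : 0 ≤ M)
    (h : ∀ z, z ⬝ᵥ y ≤ M * √(z ⬝ᵥ (H *ᵥ z))) :
    √(y ⬝ᵥ (H⁻¹ *ᵥ y)) ≤ M := by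
  set Q := y ⬝ᵥ (H⁻¹ *ᵥ y)
  have hQ : Q ≤ M * √Q := by
    have hHz : H *ᵥ (H⁻¹ *ᵥ y) = y := by rw [mulVec_mulVec, mul_nonsing_inv H hH, one_mulVec]
    simpa only [hHz, dotProduct_comm _ y] using h (H⁻¹ *ᵥ y)
  rcases le_or_gt Q 0 with hQ0 | hQ0
  · rwa [Real.sqrt_eq_zero'.2 hQ0]
  · have hsqrt : 0 < √Q := Real.sqrt_pos.2 hQ0
    nlinarith [Real.mul_self_sqrt hQ0.le]

/-- **Learning multivariate analytic functions (Theorem 1b, kernel-norm form).**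
For unit-norm data and a slowly decaying power-series kernel with positive
definite Gram matrix `H`: if `y_c = ∑_k ∑_v a_{k,v} ∏ᵢ ⟪β_{k,v,i}, x_c⟫` with
auxiliary coefficients `ãₖ` satisfying `ã₀ < ∞` and `∑_k k ãₖ < ∞`, then
`√(yᵀ H⁻¹ y) ≤ g̃′(1) + g̃(0) = ∑' k, k ãₖ + ã₀`. -/
theorem stmt6 (n d : ℕ) (x : Fin n → EuclideanSpace ℝ (Fin d))
    (hx : ∀ a, ‖x a‖ = 1)
    (b : ℕ → ℝ) (hb0 : 1 ≤ b 0) (hbk : ∀ k : ℕ, 1 ≤ k → 1 / (k : ℝ) ^ 2 ≤ b k)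
    (hb_sum : Summable b)
    (H : Matrix (Fin n) (Fin n) ℝ)
    (hH : ∀ a c, H a c = ∑' k : ℕ, b k * ⟪x a, x c⟫ ^ k)
    (hHpd : H.PosDef)
    (a : ℕ → ℕ → ℝ) (β : (k : ℕ) → ℕ → Fin k → EuclideanSpace ℝ (Fin d))
    (haux : ∀ k : ℕ, Summable (fun v : ℕ => |a k v| * ∏ i : Fin k, ‖β k v i‖))
    (hsum : Summable (fun k : ℕ => (k : ℝ) * auxCoef d a β k))
    (y : Fin n → ℝ)
    (hy : ∀ c, y c = ∑' k : ℕ, ∑' v : ℕ, a k v * ∏ i : Fin k, ⟪β k v i, x c⟫) :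
    Real.sqrt (y ⬝ᵥ (H⁻¹ *ᵥ y)) ≤
      (∑' k : ℕ, (k : ℝ) * auxCoef d a β k) + auxCoef d a β 0 := by
  set A := auxCoef d a β
  have hA0 := auxCoef_nonneg d a β
  have hbw := one_le_max_one_sq_mul hb0 hbk
  have hb : ∀ k, 0 ≤ b k := fun k =>
    nonneg_of_mul_nonneg_right (zero_le_one.trans (hbw k)) (by positivity)
  have hH' : ∀ p c, HasSum (fun k => b k * ⟪x p, x c⟫ ^ k) (H p c) := fun p c => by
    refine hH p c ▸ (summable_mul_pow_of_abs_le_one hb_sum hb ?_).hasSum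
    simpa [hx] using abs_real_inner_le_norm (x p) (x c)
  have hAw := hasSum_max_one_mul hsum
  have hA : Summable A := hAw.summable.of_nonneg_of_le hA0 fun k =>
    le_mul_of_one_le_left (hA0 k) (le_max_right _ _)
  refine sqrt_dotProduct_inv_mulVec_le (isUnit_iff_ne_zero.2 hHpd.det_pos.ne')
    (hAw.nonneg fun k => by positivity [hA0 k]) fun z => ?_
  have hs : ∀ k : ℕ, A k * √(z ⬝ᵥ (innerPowMatrix x k *ᵥ z))
      ≤ max (k : ℝ) 1 * A k * √(z ⬝ᵥ (H *ᵥ z)) := fun k => by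
    rw [mul_comm _ (A k), mul_assoc]
    exact mul_le_mul_of_nonneg_left
      (sqrt_dotProduct_innerPowMatrix_mulVec_le hH' hb (by positivity) (hbw k) z) (hA0 k)
  have hsumm : Summable fun k => A k * √(z ⬝ᵥ (innerPowMatrix x k *ᵥ z)) :=
    (hAw.summable.mul_right _).of_nonneg_of_le (fun k => by positivity [hA0 k]) hs
  calc z ⬝ᵥ y ≤ |z ⬝ᵥ y| := le_abs_self _
    _ ≤ ∑' k, A k * √(z ⬝ᵥ (innerPowMatrix x k *ᵥ z)) :=
      abs_dotProduct_le_tsum_auxCoef_mul_sqrt (fun c => (hx c).le) haux hA hy z hsumm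
    _ ≤ ∑' k : ℕ, max (k : ℝ) 1 * A k * √(z ⬝ᵥ (H *ᵥ z)) :=
      hsumm.tsum_le_tsum hs (hAw.summable.mul_right _)
    _ = _ := by rw [tsum_mul_right, hAw.tsum_eq]
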